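/- Let A = (a_{ij}) be an n×n real matrix such that D(A) belongs to the class 𝒟 and D(A) is strongly connected, and let {i_1, i_2, …, i_{s+1}} be the set of all pendant vertices adjacent to a common (non-pendant) neighbour q. Then for all m, t ∈ {1,…,s+1}, Σ_{M ∈ 𝕄(i_m, q)} β̄_{i_m, q}(M) = Σ_{M ∈ 𝕄(i_t, q)} β̄_{i_t, q}(M). -/

import Mathlib

open Matrix

/-- Adjacency in a digraph given by relation `G`: a 2-cycle between distinct `i` and `j`. -/
def Adjd {n : ℕ} (G : Fin n → Fin n → Prop) (i j : Fin n) : Prop :=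
  i ≠ j ∧ G i j ∧ G j i

/-- `G` is a simple symmetric digraph: no loops and edges come in both directions. -/
def IsSSD {n : ℕ} (G : Fin n → Fin n → Prop) : Prop :=
  (∀ i, ¬ G i i) ∧ ∀ i j, G i j → G j i

/-- A vertex is pendant if it is incident to exactly one 2-cycle. -/
def Pendant {n : ℕ} (G : Fin n → Fin n → Prop) (i : Fin n) : Prop :=
  ∃! j, Adjd G i j

/-- The class 𝒟: simple symmetric digraphs in which every non-pendant vertex is
adjacent to at least one pendant vertex. -/
def InClassD {n : ℕ} (G : Fin n → Fin n → Prop) : Prop :=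
  IsSSD G ∧ ∀ i, ¬ Pendant G i → ∃ j, Adjd G i j ∧ Pendant G j

/-- Strong connectivity: a directed path from every vertex to every other vertex. -/
def StronglyConnected {n : ℕ} (G : Fin n → Fin n → Prop) : Prop :=
  ∀ i j : Fin n, Relation.ReflTransGen G i j

/-- An unordered pair `e` is a 2-cycle of `G`. -/
def IsEdge {n : ℕ} (G : Fin n → Fin n → Prop) (e : Sym2 (Fin n)) : Prop :=
  ∃ i j, e = s(i, j) ∧ Adjd G i j

/-- A matching: a set of pairwise vertex-disjoint 2-cycles. -/
def IsMatching {n : ℕ} (G : Fin n → Fin n → Prop) (M : Finset (Sym2 (Fin n))) : Prop :=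
  (∀ e ∈ M, IsEdge G e) ∧
  ∀ e ∈ M, ∀ f ∈ M, e ≠ f → ∀ v : Fin n, v ∈ e → v ∉ f

/-- A maximum matching: a matching of maximum cardinality. -/
def IsMaxMatching {n : ℕ} (G : Fin n → Fin n → Prop) (M : Finset (Sym2 (Fin n))) : Prop :=
  IsMatching G M ∧ ∀ M', IsMatching G M' → M'.card ≤ M.card

/-- A cycle chain, recorded by its list of (distinct) vertices `i₁, …, i_{m+1}`. -/
def IsCycleChain {n : ℕ} (G : Fin n → Fin n → Prop) (c : List (Fin n)) : Prop :=
  c.Nodup ∧ 2 ≤ c.length ∧ c.Chain' (Adjd G)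

/-- A cycle chain from `i` to `j`. -/
def IsCycleChainBtw {n : ℕ} (G : Fin n → Fin n → Prop) (i j : Fin n) (c : List (Fin n)) : Prop :=
  IsCycleChain G c ∧ c.head? = some i ∧ c.getLast? = some j

/-- The list of 2-cycles of a cycle chain. -/
def chainEdges {n : ℕ} (c : List (Fin n)) : List (Sym2 (Fin n)) :=
  List.zipWith (fun a b => s(a, b)) c c.tail

/-- The cycle chain `c` is alternating with respect to `M`: its 2-cycles are alternately
in `M` and outside `M`, with the first and last 2-cycle in `M` (so its length is odd). -/
def IsAltChain {n : ℕ} (M : Finset (Sym2 (Fin n))) (c : List (Fin n)) : Prop :=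
  Odd (chainEdges c).length ∧
  ∀ k (h : k < (chainEdges c).length), ((chainEdges c).get ⟨k, h⟩ ∈ M ↔ Even k)

/-- The digraph of a square matrix: edge `(i,j)` iff `A i j ≠ 0`. -/
def DA {n : ℕ} (A : Matrix (Fin n) (Fin n) ℝ) : Fin n → Fin n → Prop :=
  fun i j => A i j ≠ 0

/-- The cycle product `a_{ij} a_{ji}` of a 2-cycle. -/
def cycProd {n : ℕ} (A : Matrix (Fin n) (Fin n) ℝ) (e : Sym2 (Fin n)) : ℝ :=
  Sym2.lift ⟨fun i j => A i j * A j i, fun i j => mul_comm _ _⟩ e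

/-- The matching product η(M) of a matching `M`. -/
noncomputable def matchProd {n : ℕ} (A : Matrix (Fin n) (Fin n) ℝ)
    (M : Finset (Sym2 (Fin n))) : ℝ :=
  ∏ e ∈ M, cycProd A e

/-- The (finite) collection of all maximum matchings of `D(A)`. -/
noncomputable def maxMatchings {n : ℕ} (A : Matrix (Fin n) (Fin n) ℝ) :
    Finset (Finset (Sym2 (Fin n))) :=
  {M | IsMaxMatching (DA A) M}.toFinite.toFinset

/-- Δ_A: the sum of the matching products over all maximum matchings of `D(A)`. -/
noncomputable def Delta {n : ℕ} (A : Matrix (Fin n) (Fin n) ℝ) : ℝ :=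
  ∑ M ∈ maxMatchings A, matchProd A M

/-- 𝕄(i,j): maximum matchings with respect to which some cycle chain from `i` to `j`
is an alternating cycle chain. -/
def MMset {n : ℕ} (A : Matrix (Fin n) (Fin n) ℝ) (i j : Fin n) :
    Set (Finset (Sym2 (Fin n))) :=
  {M | IsMaxMatching (DA A) M ∧ ∃ c, IsCycleChainBtw (DA A) i j c ∧ IsAltChain M c}

/-- `i` and `j` are maximally matchable: 𝕄(i,j) ≠ ∅. -/
def MaxMatchable {n : ℕ} (A : Matrix (Fin n) (Fin n) ℝ) (i j : Fin n) : Prop :=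
  (MMset A i j).Nonempty

open scoped Classical in
/-- The (unique) alternating cycle chain from `i` to `j`, when it exists. -/
noncomputable def theChain {n : ℕ} (A : Matrix (Fin n) (Fin n) ℝ) (i j : Fin n) :
    List (Fin n) :=
  if h : ∃ c, IsCycleChainBtw (DA A) i j c ∧ ∃ M ∈ MMset A i j, IsAltChain M c
  then h.choose else []

/-- The path product along a cycle chain: `a_{i₁ i₂} a_{i₂ i₃} ⋯ a_{i_m i_{m+1}}`. -/
def pathProd {n : ℕ} (A : Matrix (Fin n) (Fin n) ℝ) (c : List (Fin n)) : ℝ :=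
  (List.zipWith (fun a b => A a b) c c.tail).prod

open scoped Classical in
/-- β_{ij} = (−1)^{(m−1)/2} P_m(i,j) for maximally matchable `i, j`, and `0` otherwise. -/
noncomputable def beta {n : ℕ} (A : Matrix (Fin n) (Fin n) ℝ) (i j : Fin n) : ℝ :=
  if MaxMatchable A i j then
    (-1 : ℝ) ^ (((theChain A i j).length - 2) / 2) * pathProd A (theChain A i j)
  else 0

/-- β̄_{i,j}(M): product of the cycle products of the 2-cycles of `M` not contained in
the alternating cycle chain from `i` to `j`. -/
noncomputable def betaBar {n : ℕ} (A : Matrix (Fin n) (Fin n) ℝ) (i j : Fin n)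
    (M : Finset (Sym2 (Fin n))) : ℝ :=
  ∏ e ∈ M.filter (fun e => e ∉ chainEdges (theChain A i j)), cycProd A e

/-- μ_{ij} = β_{ij} · Σ_{M ∈ 𝕄(i,j)} β̄_{i,j}(M). -/
noncomputable def mu {n : ℕ} (A : Matrix (Fin n) (Fin n) ℝ) (i j : Fin n) : ℝ :=
  beta A i j * ∑ M ∈ (MMset A i j).toFinite.toFinset, betaBar A i j M

/-- `X` is a group inverse of `A`. -/
def IsGroupInverse {n : ℕ} (A X : Matrix (Fin n) (Fin n) ℝ) : Prop :=
  A * X * A = A ∧ X * A * X = X ∧ A * X = X * A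

/-- A tree digraph: strongly connected and all of its cycles have length 2. -/
def IsTreeDigraph {n : ℕ} (G : Fin n → Fin n → Prop) : Prop :=
  StronglyConnected G ∧
  ∀ (a : Fin n) (l : List (Fin n)), (a :: l).Nodup → List.Chain G a l →
    G ((a :: l).getLast (List.cons_ne_nil a l)) a → (a :: l).length = 2

/-- A star tree digraph: a tree digraph with a center adjacent to every other vertex,
every other vertex being adjacent only to the center. -/
def IsStarTree {n : ℕ} (G : Fin n → Fin n → Prop) : Prop :=
  IsTreeDigraph G ∧
  ∃ c : Fin n, (∀ j, j ≠ c → Adjd G c j) ∧ ∀ i j, Adjd G i j → i = c ∨ j = c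

/-- A corona digraph: a simple symmetric digraph in which each non-pendant vertex is
adjacent to exactly one pendant vertex. -/
def IsCorona {n : ℕ} (G : Fin n → Fin n → Prop) : Prop :=
  IsSSD G ∧ ∀ i, ¬ Pendant G i → ∃! j, Adjd G i j ∧ Pendant G j

/-- 𝕄(i): the maximum matchings in which vertex `i` is matched. -/
noncomputable def MMi {n : ℕ} (A : Matrix (Fin n) (Fin n) ℝ) (i : Fin n) :
    Finset (Finset (Sym2 (Fin n))) :=
  {M | IsMaxMatching (DA A) M ∧ ∃ e ∈ M, i ∈ e}.toFinite.toFinset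

/-!
A pendant vertex `p` adjacent to `q` has `[p, q]` as its only cycle chain to `q`, so
`𝕄(p, q)` consists of the maximum matchings containing the 2-cycle `(p, q, p)`, and
`β̄_{p,q}(M)` is the product over `M` with that 2-cycle removed. For two pendant neighbours
`p, p'` of `q`, exchanging `(p, q, p)` for `(p', q, p')` keeps a maximum matching (`p'` can
only be matched to `q`, which the exchange frees), so it is a bijection `𝕄(p, q) ≃ 𝕄(p', q)`
leaving this product unchanged.
-/

section Chains

variable {n : ℕ} {G : Fin n → Fin n → Prop}

theorem Adjd.symm {i j : Fin n} (h : Adjd G i j) : Adjd G j i :=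
  ⟨h.1.symm, h.2.2, h.2.1⟩

theorem IsCycleChainBtw.eq_pair_of_pendant {p q : Fin n} {c : List (Fin n)}
    (hp : Pendant G p) (hpq : Adjd G p q) (hc : IsCycleChainBtw G p q c) : c = [p, q] := by
  obtain ⟨⟨hnd, hlen, hch⟩, hhead, hlast⟩ := hc
  match c, hlen with
  | a :: b :: rest, _ =>
    obtain rfl : a = p := by simpa using hhead
    obtain rfl : b = q := hp.unique (List.isChain_cons_cons.mp hch).1 hpq
    cases rest with
    | nil => rfl
    | cons y rest =>
      have hq_mem : b ∈ y :: rest := List.mem_of_getLast? (by simpa using hlast)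
      exact absurd hq_mem (List.nodup_cons.mp (List.nodup_cons.mp hnd).2).1

theorem isCycleChainBtw_pair {p q : Fin n} (hpq : Adjd G p q) :
    IsCycleChainBtw G p q [p, q] :=
  ⟨⟨by simp [hpq.1], by simp, List.isChain_pair.mpr hpq⟩, rfl, rfl⟩

theorem isAltChain_pair_iff {M : Finset (Sym2 (Fin n))} {p q : Fin n} :
    IsAltChain M [p, q] ↔ s(p, q) ∈ M := by
  simp [IsAltChain, chainEdges]

theorem IsEdge.eq_of_pendant_mem {e : Sym2 (Fin n)} {b q : Fin n} (he : IsEdge G e)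
    (hb : Pendant G b) (hbq : Adjd G b q) (hbe : b ∈ e) : e = s(b, q) := by
  obtain ⟨i, j, rfl, hij⟩ := he
  rcases Sym2.mem_iff.mp hbe with rfl | rfl
  · rw [hb.unique hij hbq]
  · rw [hb.unique hij.symm hbq, Sym2.eq_swap]

end Chains

section Matchings

variable {n : ℕ} {G : Fin n → Fin n → Prop}

theorem IsMatching.subset {M N : Finset (Sym2 (Fin n))} (hM : IsMatching G M) (hNM : N ⊆ M) :
    IsMatching G N :=
  ⟨fun e he => hM.1 e (hNM he), fun e he f hf => hM.2 e (hNM he) f (hNM hf)⟩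

theorem IsMatching.insert {M : Finset (Sym2 (Fin n))} {e : Sym2 (Fin n)} (hM : IsMatching G M)
    (he : IsEdge G e) (hdisj : ∀ f ∈ M, ∀ v ∈ e, v ∉ f) : IsMatching G (insert e M) := by
  refine ⟨fun f hf => ?_, fun f hf g hg hfg v hvf => ?_⟩
  · rcases Finset.mem_insert.mp hf with rfl | hf
    exacts [he, hM.1 f hf]
  · rcases Finset.mem_insert.mp hf with rfl | hfM <;> rcases Finset.mem_insert.mp hg with rfl | hgM
    · exact absurd rfl hfg
    · exact hdisj g hgM v hvf
    · exact fun hvg => hdisj f hfM v hvg hvf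
    · exact hM.2 f hfM g hgM hfg v hvf

theorem notMem_of_forall_vertex_notMem {M : Finset (Sym2 (Fin n))} {e : Sym2 (Fin n)}
    (hdisj : ∀ f ∈ M, ∀ v ∈ e, v ∉ f) : e ∉ M :=
  fun he => hdisj e he _ (Sym2.out_fst_mem e) (Sym2.out_fst_mem e)

theorem IsMaxMatching.insert_erase {M : Finset (Sym2 (Fin n))} {e e' : Sym2 (Fin n)}
    (hM : IsMaxMatching G M) (he : e ∈ M) (he' : IsEdge G e')
    (hdisj : ∀ f ∈ M.erase e, ∀ v ∈ e', v ∉ f) : IsMaxMatching G (insert e' (M.erase e)) := by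
  refine ⟨(hM.1.subset (Finset.erase_subset e M)).insert he' hdisj, fun N hN => ?_⟩
  rw [Finset.card_insert_of_notMem (notMem_of_forall_vertex_notMem hdisj), Finset.card_erase_add_one he]
  exact hM.2 N hN

theorem IsMatching.disjoint_erase_of_pendant {M : Finset (Sym2 (Fin n))} {a b q : Fin n}
    (hM : IsMatching G M) (haM : s(a, q) ∈ M) (hb : Pendant G b) (hbq : Adjd G b q)
    (hab : a ≠ b) : ∀ f ∈ M.erase s(a, q), ∀ v ∈ s(b, q), v ∉ f := by
  have hq : ∀ f ∈ M.erase s(a, q), q ∉ f := fun f hf =>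
    hM.2 _ haM f (Finset.mem_of_mem_erase hf) (Finset.ne_of_mem_erase hf).symm q (by simp)
  intro f hf v hv hvf
  rcases Sym2.mem_iff.mp hv with rfl | rfl
  · have hfbq := (hM.1 f (Finset.mem_of_mem_erase hf)).eq_of_pendant_mem hb hbq hvf
    exact hq f hf (hfbq ▸ Sym2.mem_mk_right v q)
  · exact hq f hf hvf

end Matchings

section PendantNeighbours

variable {n : ℕ} {A : Matrix (Fin n) (Fin n) ℝ} {p q : Fin n}

theorem mem_MMset_iff_of_pendant (hp : Pendant (DA A) p) (hpq : Adjd (DA A) p q)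
    {M : Finset (Sym2 (Fin n))} :
    M ∈ MMset A p q ↔ IsMaxMatching (DA A) M ∧ s(p, q) ∈ M := by
  refine ⟨fun ⟨hM, c, hc, halt⟩ => ⟨hM, ?_⟩, fun ⟨hM, hpqM⟩ => ?_⟩
  · rw [hc.eq_pair_of_pendant hp hpq] at halt
    exact isAltChain_pair_iff.mp halt
  · exact ⟨hM, [p, q], isCycleChainBtw_pair hpq, isAltChain_pair_iff.mpr hpqM⟩

theorem theChain_eq_pair_of_pendant (hp : Pendant (DA A) p) (hpq : Adjd (DA A) p q)
    {M : Finset (Sym2 (Fin n))} (hM : M ∈ MMset A p q) : theChain A p q = [p, q] := by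
  obtain ⟨-, c, hc, halt⟩ := id hM
  have h : ∃ c, IsCycleChainBtw (DA A) p q c ∧ ∃ M ∈ MMset A p q, IsAltChain M c :=
    ⟨c, hc, M, hM, halt⟩
  rw [theChain, dif_pos h]
  exact h.choose_spec.1.eq_pair_of_pendant hp hpq

theorem betaBar_eq_prod_erase (hp : Pendant (DA A) p) (hpq : Adjd (DA A) p q)
    {M : Finset (Sym2 (Fin n))} (hM : M ∈ MMset A p q) :
    betaBar A p q M = ∏ e ∈ M.erase s(p, q), cycProd A e := by
  classical
  rw [betaBar, theChain_eq_pair_of_pendant hp hpq hM]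
  congr 1
  ext e
  simp [chainEdges, and_comm]

theorem swap_mem_MMset_of_pendant {p' : Fin n} (hp : Pendant (DA A) p) (hpq : Adjd (DA A) p q)
    (hp' : Pendant (DA A) p') (hp'q : Adjd (DA A) p' q) (hne : p ≠ p')
    {M : Finset (Sym2 (Fin n))} (hM : M ∈ MMset A p q) :
    s(p, q) ∈ M ∧ s(p', q) ∉ M.erase s(p, q) ∧
      insert s(p', q) (M.erase s(p, q)) ∈ MMset A p' q := by
  obtain ⟨hmax, hpqM⟩ := (mem_MMset_iff_of_pendant hp hpq).mp hM
  have hdisj := hmax.1.disjoint_erase_of_pendant hpqM hp' hp'q hne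
  exact ⟨hpqM, notMem_of_forall_vertex_notMem hdisj, (mem_MMset_iff_of_pendant hp' hp'q).mpr
    ⟨hmax.insert_erase hpqM ⟨p', q, rfl, hp'q⟩ hdisj, Finset.mem_insert_self _ _⟩⟩

theorem Finset.insert_erase_insert_erase {α : Type*} [DecidableEq α] {s : Finset α} {a b : α}
    (ha : a ∈ s) (hb : b ∉ s.erase a) : insert a ((insert b (s.erase a)).erase b) = s := by
  rw [Finset.erase_insert hb, Finset.insert_erase ha]

theorem sum_betaBar_eq_of_pendant {p' : Fin n} (hp : Pendant (DA A) p)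
    (hpq : Adjd (DA A) p q) (hp' : Pendant (DA A) p') (hp'q : Adjd (DA A) p' q) :
    ∑ M ∈ (MMset A p q).toFinite.toFinset, betaBar A p q M =
      ∑ M ∈ (MMset A p' q).toFinite.toFinset, betaBar A p' q M := by
  rcases eq_or_ne p p' with rfl | hne
  · rfl
  have swap {M} (hM : M ∈ MMset A p q) := swap_mem_MMset_of_pendant hp hpq hp' hp'q hne hM
  have swap' {N} (hN : N ∈ MMset A p' q) :=
    swap_mem_MMset_of_pendant hp' hp'q hp hpq hne.symm hN
  refine Finset.sum_nbij' (fun M => insert s(p', q) (M.erase s(p, q)))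
    (fun N => insert s(p, q) (N.erase s(p', q))) ?_ ?_ ?_ ?_ ?_ <;>
    intro M hM <;> rw [Set.Finite.mem_toFinset] at hM
  · exact (Set.Finite.mem_toFinset _).mpr (swap hM).2.2
  · exact (Set.Finite.mem_toFinset _).mpr (swap' hM).2.2
  · exact Finset.insert_erase_insert_erase (swap hM).1 (swap hM).2.1
  · exact Finset.insert_erase_insert_erase (swap' hM).1 (swap' hM).2.1
  · rw [betaBar_eq_prod_erase hp hpq hM, betaBar_eq_prod_erase hp' hp'q (swap hM).2.2,
      Finset.erase_insert (swap hM).2.1]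

end PendantNeighbours

theorem betaBar_sum_independent_general {n : ℕ} (A : Matrix (Fin n) (Fin n) ℝ)
    (s : ℕ) (q : Fin n)
    (f : Fin (s + 1) → Fin n)
    (hrange : Set.range f = {p | Pendant (DA A) p ∧ Adjd (DA A) p q}) :
    ∀ m t : Fin (s + 1),
      (∑ M ∈ (MMset A (f m) q).toFinite.toFinset, betaBar A (f m) q M) =
        ∑ M ∈ (MMset A (f t) q).toFinite.toFinset, betaBar A (f t) q M := by
  have hf (k : Fin (s + 1)) : Pendant (DA A) (f k) ∧ Adjd (DA A) (f k) q :=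
    hrange.subset (Set.mem_range_self k)
  intro m t
  exact sum_betaBar_eq_of_pendant (hf m).1 (hf m).2 (hf t).1 (hf t).2

/-- Remark 2.5(ii): if `i₁, …, i_{s+1}` are all the pendant vertices adjacent to a common
non-pendant neighbour `q`, then `Σ_{M ∈ 𝕄(i_m,q)} β̄_{i_m,q}(M)` is independent of `m`. -/
theorem betaBar_sum_independent {n : ℕ} (A : Matrix (Fin n) (Fin n) ℝ)
    (hD : InClassD (DA A)) (hSC : StronglyConnected (DA A))
    (s : ℕ) (q : Fin n) (hq : ¬ Pendant (DA A) q)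
    (f : Fin (s + 1) → Fin n) (hinj : Function.Injective f)
    (hrange : Set.range f = {p | Pendant (DA A) p ∧ Adjd (DA A) p q}) :
    ∀ m t : Fin (s + 1),
      (∑ M ∈ (MMset A (f m) q).toFinite.toFinset, betaBar A (f m) q M) =
        ∑ M ∈ (MMset A (f t) q).toFinite.toFinset, betaBar A (f t) q M :=
  betaBar_sum_independent_general A s q f hrange
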